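/- Let f be a quadratic polynomial as in the context and N ≥ 1 an integer. For every real z with 3 ≤ z ≤ A one has V(A) ≤ V(z) ≤ V(A)·exp(2·δ(z)). -/

import Mathlib

open Finset

noncomputable section

/-- The Kronecker symbol `(D/p)` at a prime `p`. -/
def kroneckerPrime (D : ℤ) (p : ℕ) : ℤ :=
  if p = 2 then (if D % 2 = 0 then 0 else if D % 8 = 1 ∨ D % 8 = 7 then 1 else -1)
  else jacobiSym D p

/-- The Kronecker symbol `χ_D(n) = (D/n)` for `n : ℕ`, extended multiplicatively. -/
def kronecker (D : ℤ) (n : ℕ) : ℤ :=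
  n.factorization.prod fun p k => kroneckerPrime D p ^ k

/-- `L(1, χ_D) = ∑_{n ≥ 1} χ_D(n)/n`, as the limit of its partial sums. -/
def LOne (D : ℤ) : ℝ :=
  Filter.limUnder Filter.atTop fun N : ℕ => ∑ n ∈ Finset.Icc 1 N, (kronecker D n : ℝ) / n

/-- `λ = 1 * χ_D`, i.e. `λ(n) = ∑_{d ∣ n} χ_D(d)`. -/
def lamArith (D : ℤ) (n : ℕ) : ℤ := ∑ d ∈ n.divisors, kronecker D d

/-- The quadratic polynomial `f(n) = a n² + b n + c`. -/
def fInt (a b c n : ℤ) : ℤ := a * n ^ 2 + b * n + c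

/-- `ρ(d) = #{n mod d : f(n) ≡ 0 (mod d)}`. -/
def rho (a b c : ℤ) (d : ℕ) : ℕ :=
  ((Finset.range d).filter fun n : ℕ => (d : ℤ) ∣ fInt a b c (n : ℤ)).card

/-- `A = #𝒜 = #{n ∈ ℤ : 0 ≤ f(n) ≤ N}`. -/
def Acard (a b c N : ℤ) : ℕ := Set.ncard {n : ℤ | 0 ≤ fInt a b c n ∧ fInt a b c n ≤ N}

/-- `A_d = #{n ∈ 𝒜 : d ∣ f(n)}`. -/
def Adcard (a b c N : ℤ) (d : ℕ) : ℕ :=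
  Set.ncard {n : ℤ | 0 ≤ fInt a b c n ∧ fInt a b c n ≤ N ∧ (d : ℤ) ∣ fInt a b c n}

/-- The finset of primes `p < x`. -/
def primesLT (x : ℝ) : Finset ℕ :=
  (Finset.range (Nat.ceil x + 1)).filter fun p => p.Prime ∧ (p : ℝ) < x

/-- `V(x) = ∏_{p < x} (1 - ρ(p)/p)`. -/
def Vprod (a b c : ℤ) (x : ℝ) : ℝ := ∏ p ∈ primesLT x, (1 - (rho a b c p : ℝ) / p)

/-- `W(x) = ∏_{p < x} (1 - 1/p)(1 - χ_D(p)/p)`. -/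
def Wprod (D : ℤ) (x : ℝ) : ℝ :=
  ∏ p ∈ primesLT x, ((1 - 1 / (p : ℝ)) * (1 - (kronecker D p : ℝ) / p))

/-- `P(z) = ∏_{p < z} p`. -/
def Pprod (z : ℝ) : ℕ := ∏ p ∈ primesLT z, p

/-- `S(𝒜, z) = #{n ∈ 𝒜 : gcd(f(n), P(z)) = 1}`. -/
def Ssieve (a b c N : ℤ) (z : ℝ) : ℕ :=
  Set.ncard {n : ℤ | 0 ≤ fInt a b c n ∧ fInt a b c n ≤ N ∧
    Int.gcd (fInt a b c n) (Pprod z) = 1}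

/-- `S(𝒜_p, z) = #{n ∈ 𝒜 : p ∣ f(n), gcd(f(n), P(z)) = 1}`. -/
def SsieveP (a b c N : ℤ) (p : ℕ) (z : ℝ) : ℕ :=
  Set.ncard {n : ℤ | 0 ≤ fInt a b c n ∧ fInt a b c n ≤ N ∧ (p : ℤ) ∣ fInt a b c n ∧
    Int.gcd (fInt a b c n) (Pprod z) = 1}

/-- `π_f(N) = #{n ∈ ℤ : 0 ≤ f(n) ≤ N, f(n) prime}`. -/
def piF (a b c N : ℤ) : ℕ :=
  Set.ncard {n : ℤ | 0 ≤ fInt a b c n ∧ fInt a b c n ≤ N ∧ Prime (fInt a b c n)}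

/-- `δ(x) = ∑_{x ≤ p ≤ A} λ(p)/p`. -/
def deltaSum (a b c N D : ℤ) (x : ℝ) : ℝ :=
  ∑ p ∈ (Finset.range (Acard a b c N + 1)).filter (fun p : ℕ => p.Prime ∧ x ≤ (p : ℝ)),
    (lamArith D p : ℝ) / p

/-- `β = -log(L(1,χ_D) · log|D|)`. -/
def betaE (D : ℤ) : ℝ := - Real.log (LOne D * Real.log |(D : ℝ)|)

/-- `g(Δ) = Δ e^{-β/2}` for `Δ > 0` and `|Δ|/(4|a| - e^{-β/2})` for `Δ < 0`. -/
def gDisc (a D : ℤ) : ℝ :=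
  if 0 < D then (D : ℝ) * Real.exp (-(betaE D) / 2)
  else |(D : ℝ)| / (4 * |(a : ℝ)| - Real.exp (-(betaE D) / 2))

/-!
Splitting off the primes in `[z, A)` gives `V(A) = V(z) · ∏_{z ≤ p < A} (1 - ρ(p)/p)`, and
every factor lies in `[0, 1]`, which is the lower bound. For the upper bound, at an odd prime `p`
the roots of `f` modulo `p` inject into the square roots of `Δ` via `x ↦ 2ax + b`, so
`ρ(p) ≤ 1 + (Δ/p) = λ(p) ≤ 2`; and `(1 - t) e^{2t} ≥ 1` for `0 ≤ t ≤ 2/3`, which applies to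
`t = λ(p)/p` once `p ≥ 3`.
-/

section QuadraticRoots

variable {F : Type*} [Field F] [Fintype F] [DecidableEq F]

lemma card_quadratic_roots_le_card_sqrts {A : F} (B C : F) (hA : A ≠ 0) (hF : ringChar F ≠ 2) :
    #{x | A * x ^ 2 + B * x + C = 0} ≤ #{y : F | y ^ 2 = discrim A B C}.toFinset := by
  have h2 : (2 : F) ≠ 0 := Ring.two_ne_zero hF
  refine card_le_card_of_injOn (fun x => 2 * A * x + B) (fun x hx => ?_)
    (fun x _ y _ hxy => ?_)
  · simp only [coe_filter, mem_univ, true_and, Set.mem_ofPred_eq, Set.coe_toFinset] at hx ⊢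
    rw [discrim_eq_sq_of_quadratic_eq_zero (x := x) (by rwa [← sq])]
  · exact mul_left_cancel₀ (mul_ne_zero h2 hA) (add_right_cancel hxy)

lemma card_linear_roots_le_one {B : F} (C : F) (hB : B ≠ 0) : #{x | B * x + C = 0} ≤ 1 :=
  card_le_one.mpr fun x hx y hy => by
    simp only [mem_filter, mem_univ, true_and] at hx hy
    exact mul_left_cancel₀ hB (by linear_combination hx - hy)

lemma card_quadratic_roots_le (A B C : F) (hF : ringChar F ≠ 2)
    (hABC : ¬(A = 0 ∧ B = 0 ∧ C = 0)) :
    (#{x | A * x ^ 2 + B * x + C = 0} : ℤ) ≤ 1 + quadraticChar F (discrim A B C) := by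
  by_cases hA : A = 0
  · subst hA
    by_cases hB : B = 0
    · subst hB
      have hC : C ≠ 0 := by tauto
      simp [discrim, hC]
    · have hχ : quadraticChar F (discrim 0 B C) = 1 := by
        simpa [discrim] using quadraticChar_sq_one' hB
      have h1 := card_linear_roots_le_one C hB
      simp only [zero_mul, zero_add, hχ]
      omega
  · have h := card_quadratic_roots_le_card_sqrts B C hA hF
    rw [← Nat.cast_le (α := ℤ), quadraticChar_card_sqrts hF] at h
    linarith

end QuadraticRoots

lemma kronecker_prime (D : ℤ) {p : ℕ} (hp : p.Prime) : kronecker D p = kroneckerPrime D p := by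
  simp [kronecker, hp.factorization]

lemma kroneckerPrime_eq_legendreSym (D : ℤ) {p : ℕ} [Fact p.Prime] (hp2 : p ≠ 2) :
    kroneckerPrime D p = legendreSym p D := by
  rw [kroneckerPrime, if_neg hp2, jacobiSym.legendreSym.to_jacobiSym]

lemma lamArith_prime (D : ℤ) {p : ℕ} (hp : p.Prime) :
    lamArith D p = 1 + kroneckerPrime D p := by
  rw [lamArith, hp.divisors, sum_pair hp.one_lt.ne, kronecker_prime D hp]
  simp [kronecker]

lemma lamArith_prime_mem_Icc (D : ℤ) {p : ℕ} (hp : p.Prime) : lamArith D p ∈ Set.Icc 0 2 := by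
  have h : kroneckerPrime D p = 0 ∨ kroneckerPrime D p = 1 ∨ kroneckerPrime D p = -1 := by
    unfold kroneckerPrime
    split_ifs
    exacts [Or.inl rfl, Or.inr (Or.inl rfl), Or.inr (Or.inr rfl), jacobiSym.trichotomy D p]
  rw [lamArith_prime D hp]
  rcases h with h | h | h <;> simp [h]

lemma rho_le (a b c : ℤ) (d : ℕ) : rho a b c d ≤ d :=
  (card_filter_le _ _).trans (card_range d).le

lemma rho_eq_card_roots (a b c : ℤ) (p : ℕ) [NeZero p] :
    rho a b c p = #{x : ZMod p | (a : ZMod p) * x ^ 2 + b * x + c = 0} := by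
  have hroot (n : ℤ) :
      (p : ℤ) ∣ fInt a b c n ↔ (a : ZMod p) * (n : ZMod p) ^ 2 + b * n + c = 0 := by
    rw [← ZMod.intCast_zmod_eq_zero_iff_dvd, fInt]
    push_cast
    rfl
  refine card_bij (fun n _ => (n : ZMod p)) (fun n hn => ?_) (fun n hn m hm h => ?_)
    (fun x hx => ?_)
  · simp only [mem_filter, mem_range, mem_univ, true_and] at hn ⊢
    exact_mod_cast (hroot n).mp hn.2
  · simp only [mem_filter, mem_range] at hn hm
    rw [← ZMod.val_cast_of_lt hn.1, ← ZMod.val_cast_of_lt hm.1, h]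
  · simp only [mem_filter, mem_univ, true_and] at hx
    refine ⟨x.val, mem_filter.mpr ⟨mem_range.mpr x.val_lt, (hroot x.val).mpr ?_⟩,
      ZMod.natCast_zmod_val x⟩
    simpa using hx

lemma rho_le_lamArith {a b c D : ℤ} (hgcd : Int.gcd a (Int.gcd b c) = 1)
    (hD : D = b ^ 2 - 4 * a * c) {p : ℕ} (hp : p.Prime) (hp2 : p ≠ 2) :
    (rho a b c p : ℤ) ≤ lamArith D p := by
  have : Fact p.Prime := ⟨hp⟩
  have hcoeff : ¬((a : ZMod p) = 0 ∧ (b : ZMod p) = 0 ∧ (c : ZMod p) = 0) := by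
    simp only [ZMod.intCast_zmod_eq_zero_iff_dvd]
    rintro ⟨ha, hb, hc⟩
    have h := Int.dvd_coe_gcd ha (Int.dvd_coe_gcd hb hc)
    rw [hgcd, Int.natCast_dvd_natCast, Nat.dvd_one] at h
    exact hp.one_lt.ne' h
  have hdisc : discrim (a : ZMod p) b c = D := by rw [hD, discrim]; push_cast; ring
  rw [lamArith_prime D hp, kroneckerPrime_eq_legendreSym D hp2, legendreSym, rho_eq_card_roots,
    ← hdisc]
  exact card_quadratic_roots_le _ _ _ (by rwa [ZMod.ringChar_zmod_n]) hcoeff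

lemma one_le_one_sub_mul_exp_two_mul {t : ℝ} (ht0 : 0 ≤ t) (ht : t ≤ 2 / 3) :
    1 ≤ (1 - t) * Real.exp (2 * t) := by
  have hexp := Real.quadratic_le_exp_of_nonneg (by positivity : 0 ≤ 2 * t)
  -- `(1 - t)(1 + 2t + 2t²) = 1 + t(1 - 2t²)`
  nlinarith [mul_nonneg ht0 (by nlinarith : 0 ≤ 1 - 2 * t ^ 2)]

lemma one_le_prod_one_sub_mul_exp_two_mul_sum {ι : Type*} (s : Finset ι) {u t : ι → ℝ}
    (hu : ∀ i ∈ s, 0 ≤ u i) (hut : ∀ i ∈ s, u i ≤ t i) (ht : ∀ i ∈ s, t i ≤ 2 / 3) :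
    1 ≤ (∏ i ∈ s, (1 - u i)) * Real.exp (2 * ∑ i ∈ s, t i) := by
  rw [mul_sum, Real.exp_sum, ← prod_mul_distrib]
  refine one_le_prod fun i hi => ?_
  calc 1 ≤ (1 - t i) * Real.exp (2 * t i) :=
        one_le_one_sub_mul_exp_two_mul ((hu i hi).trans (hut i hi)) (ht i hi)
    _ ≤ (1 - u i) * Real.exp (2 * t i) := by gcongr; exact hut i hi

lemma mem_primesLT {x : ℝ} {p : ℕ} : p ∈ primesLT x ↔ p.Prime ∧ (p : ℝ) < x := by
  simp only [primesLT, mem_filter, mem_range, and_iff_right_iff_imp]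
  intro ⟨_, hpx⟩
  have hp : (p : ℝ) < ⌈x⌉₊ + 1 := hpx.trans_le ((Nat.le_ceil x).trans (by linarith))
  exact_mod_cast hp

lemma primesLT_mono {x y : ℝ} (hxy : x ≤ y) : primesLT x ⊆ primesLT y := fun p hp => by
  rw [mem_primesLT] at hp ⊢
  exact ⟨hp.1, hp.2.trans_le hxy⟩

lemma mem_primesLT_sdiff {x y : ℝ} {p : ℕ} :
    p ∈ primesLT y \ primesLT x ↔ p.Prime ∧ x ≤ p ∧ (p : ℝ) < y := by
  simp only [mem_sdiff, mem_primesLT, not_and, not_lt]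
  tauto

section Vprod

variable (a b c : ℤ)

lemma one_sub_rho_div_mem_Icc (p : ℕ) : 1 - (rho a b c p : ℝ) / p ∈ Set.Icc 0 1 := by
  constructor
  · rw [sub_nonneg]
    exact div_le_one_of_le₀ (by exact_mod_cast rho_le a b c p) (Nat.cast_nonneg p)
  · simp only [sub_le_self_iff]
    positivity

lemma Vprod_nonneg (x : ℝ) : 0 ≤ Vprod a b c x :=
  prod_nonneg fun p _ => (one_sub_rho_div_mem_Icc a b c p).1

lemma Vprod_eq_mul_prod_sdiff {x y : ℝ} (hxy : x ≤ y) :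
    Vprod a b c y =
      (∏ p ∈ primesLT y \ primesLT x, (1 - (rho a b c p : ℝ) / p)) * Vprod a b c x :=
  (prod_sdiff (primesLT_mono hxy)).symm

lemma Vprod_antitone : Antitone (Vprod a b c) := fun x y hxy => by
  rw [Vprod_eq_mul_prod_sdiff a b c hxy]
  exact mul_le_of_le_one_left (Vprod_nonneg a b c x)
    (prod_le_one (fun p _ => (one_sub_rho_div_mem_Icc a b c p).1)
      (fun p _ => (one_sub_rho_div_mem_Icc a b c p).2))

end Vprod

lemma one_le_prod_one_sub_rho_div_mul_exp {a b c D : ℤ} (hgcd : Int.gcd a (Int.gcd b c) = 1)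
    (hD : D = b ^ 2 - 4 * a * c) {x : ℝ} (hx : 3 ≤ x) (y : ℝ) :
    1 ≤ (∏ p ∈ primesLT y \ primesLT x, (1 - (rho a b c p : ℝ) / p)) *
      Real.exp (2 * ∑ p ∈ primesLT y \ primesLT x, (lamArith D p : ℝ) / p) := by
  refine one_le_prod_one_sub_mul_exp_two_mul_sum _ (fun p _ => by positivity)
    (fun p hp => ?_) (fun p hp => ?_) <;> obtain ⟨hp, hxp, -⟩ := mem_primesLT_sdiff.mp hp
  · have hp3 : 3 ≤ p := by exact_mod_cast hx.trans hxp
    gcongr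
    exact_mod_cast rho_le_lamArith hgcd hD hp (by omega)
  · rw [div_le_div_iff₀ (by exact_mod_cast hp.pos) (by norm_num)]
    have h2 : (lamArith D p : ℝ) ≤ 2 := by exact_mod_cast (lamArith_prime_mem_Icc D hp).2
    linarith

lemma sum_lamArith_div_le_deltaSum (a b c N D : ℤ) (z : ℝ) :
    ∑ p ∈ primesLT (Acard a b c N) \ primesLT z, (lamArith D p : ℝ) / p ≤
      deltaSum a b c N D z := by
  refine sum_le_sum_of_subset_of_nonneg (fun p hp => ?_) (fun p hp _ => ?_)
  · obtain ⟨hp, hzp, hpA⟩ := mem_primesLT_sdiff.mp hp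
    simp only [mem_filter, mem_range]
    exact ⟨by exact_mod_cast hpA.trans (lt_add_one _), hp, hzp⟩
  · have hp := (mem_filter.mp hp).2.1
    exact div_nonneg (by exact_mod_cast (lamArith_prime_mem_Icc D hp).1) (Nat.cast_nonneg p)

theorem V_comparison_general (a b c D N : ℤ)
    (hgcd : Int.gcd a (Int.gcd b c) = 1)
    (hD : D = b ^ 2 - 4 * a * c) (z : ℝ) (hz : 3 ≤ z) (hzA : z ≤ (Acard a b c N : ℝ)) :
    Vprod a b c (Acard a b c N : ℝ) ≤ Vprod a b c z ∧
      Vprod a b c z ≤ Vprod a b c (Acard a b c N : ℝ) *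
        Real.exp (2 * deltaSum a b c N D z) := by
  refine ⟨Vprod_antitone a b c hzA, ?_⟩
  calc Vprod a b c z
      ≤ Vprod a b c z * ((∏ p ∈ primesLT (Acard a b c N) \ primesLT z,
          (1 - (rho a b c p : ℝ) / p)) *
          Real.exp (2 * deltaSum a b c N D z)) := by
        refine le_mul_of_one_le_right (Vprod_nonneg a b c z)
          ((one_le_prod_one_sub_rho_div_mul_exp hgcd hD hz (Acard a b c N)).trans ?_)
        gcongr
        · exact prod_nonneg fun p _ => (one_sub_rho_div_mem_Icc a b c p).1
        · exact sum_lamArith_div_le_deltaSum a b c N D z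
    _ = Vprod a b c (Acard a b c N) * Real.exp (2 * deltaSum a b c N D z) := by
        rw [Vprod_eq_mul_prod_sdiff a b c hzA]
        ring

theorem V_comparison (a b c D N : ℤ)
    (ha : a ≠ 0) (hgcd : Int.gcd a (Int.gcd b c) = 1)
    (hpar : Odd (a + b) ∨ Odd c)
    (hD : D = b ^ 2 - 4 * a * c) (hsq : ¬ IsSquare D)
    (hN : 1 ≤ N) (z : ℝ) (hz : 3 ≤ z) (hzA : z ≤ (Acard a b c N : ℝ)) :
    Vprod a b c (Acard a b c N : ℝ) ≤ Vprod a b c z ∧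
      Vprod a b c z ≤ Vprod a b c (Acard a b c N : ℝ) *
        Real.exp (2 * deltaSum a b c N D z) :=
  V_comparison_general a b c D N hgcd hD z hz hzA
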